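/- Let Ω be a first-order signature containing at least one constant symbol, let S be a set of ground atoms over Ω (no equality atoms), and let I_S be the least Herbrand model of S. Let φ be a sentence of the form (∃x₁)⋯(∃x_k) ⋁_{i=1}^m ⋀_{j=1}^{n_i} A_{ij} where each A_{ij} is an atomic formula with free variables among x₁,…,x_k. If I_S ⊨ φ, then φ is a logical consequence of S, i.e., every Ω-structure satisfying all atoms of S satisfies φ. -/

import Mathlib

open FirstOrder FirstOrder.Language

universe u v w

/-- A ground atom over the signature `L`: a predicate symbol applied to ground terms
(no equality atoms). -/
structure GroundAtom (L : FirstOrder.Language.{u, v}) where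
  arity : ℕ
  rel : L.Relations arity
  args : Fin arity → L.Term Empty

/-- The ground atom `a` holds in the `L`-structure `M` (with structure `si`). -/
def GroundAtom.HoldsIn {L : FirstOrder.Language.{u, v}} (a : GroundAtom L)
    (M : Type w) (si : L.Structure M) : Prop :=
  letI := si
  Structure.RelMap a.rel fun i => (a.args i).realize (Empty.elim : Empty → M)

/-- The least Herbrand model of a set `S` of ground atoms: the domain is the set of
ground terms, function symbols act syntactically, and a predicate holds of a tuple of
ground terms exactly when the corresponding atom belongs to `S`. -/
def herbrandStructure (L : FirstOrder.Language.{u, v}) (S : Set (GroundAtom L)) :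
    L.Structure (L.Term Empty) where
  funMap := fun f ts => Term.func f ts
  RelMap := fun {n} R ts => (⟨n, R, ts⟩ : GroundAtom L) ∈ S

/-- An atomic formula with free variables among `x₁, …, x_k` (represented by `Fin k`):
either a predicate symbol applied to terms, or an equation between terms. -/
inductive FAtom (L : FirstOrder.Language.{u, v}) (k : ℕ) where
  | rel : ∀ {n : ℕ}, L.Relations n → (Fin n → L.Term (Fin k)) → FAtom L k
  | eq : L.Term (Fin k) → L.Term (Fin k) → FAtom L k

/-- Tarskian satisfaction of an atom under a valuation `v` of the variables. -/
def FAtom.Realize {L : FirstOrder.Language.{u, v}} {k : ℕ} {M : Type w} [L.Structure M]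
    (v : Fin k → M) : FAtom L k → Prop
  | .rel R ts => Structure.RelMap R fun i => (ts i).realize v
  | .eq t₁ t₂ => t₁.realize v = t₂.realize v

/-- `M ⊨ (∃x₁)⋯(∃x_k) ⋁_{i=1}^m ⋀_{j=1}^{n_i} A i j`, the existential closure of a
positive boolean combination of atoms. -/
def SatECPBC {L : FirstOrder.Language.{u, v}} {k m : ℕ} {ni : Fin m → ℕ}
    (A : ∀ i : Fin m, Fin (ni i) → FAtom L k) (M : Type w) [L.Structure M] : Prop :=
  ∃ v : Fin k → M, ∃ i : Fin m, ∀ j : Fin (ni i), (A i j).Realize v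

/-
Evaluating ground terms in a model `B` of `S` is a homomorphism from the least
Herbrand model into `B`, and homomorphisms preserve existentially quantified positive
combinations of atoms.
-/

namespace FAtom

variable {L : FirstOrder.Language.{u, v}} {k : ℕ} {M N : Type*} [L.Structure M] [L.Structure N]

theorem Realize.map_hom (g : M →[L] N) {val : Fin k → M} {a : FAtom L k}
    (h : a.Realize val) : a.Realize (g ∘ val) := by
  cases a with
  | rel R ts =>
    simp only [FAtom.Realize, HomClass.realize_term] at h ⊢
    exact g.map_rel R _ h
  | eq t₁ t₂ =>
    simp only [FAtom.Realize, HomClass.realize_term] at h ⊢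
    rw [h]

end FAtom

theorem SatECPBC.map_hom {L : FirstOrder.Language.{u, v}} {k m : ℕ} {ni : Fin m → ℕ}
    {A : ∀ i : Fin m, Fin (ni i) → FAtom L k} {M N : Type*} [L.Structure M] [L.Structure N]
    (g : M →[L] N) (h : SatECPBC A M) : SatECPBC A N := by
  obtain ⟨val, i, hval⟩ := h
  exact ⟨g ∘ val, i, fun j => (hval j).map_hom g⟩

def herbrandEval (L : FirstOrder.Language.{u, v}) (S : Set (GroundAtom L)) (B : Type w)
    [sb : L.Structure B] (hS : ∀ a ∈ S, a.HoldsIn B sb) :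
    @Hom L (L.Term Empty) B (herbrandStructure L S) sb :=
  @Hom.mk L (L.Term Empty) B (herbrandStructure L S) sb (fun t => t.realize Empty.elim)
    (fun _ _ => rfl) (fun r ts hr => hS ⟨_, r, ts⟩ hr)

theorem herbrand_sat_implies_logical_consequence_general (L : FirstOrder.Language.{u, v})
    (S : Set (GroundAtom L))
    {k m : ℕ} {ni : Fin m → ℕ} (A : ∀ i : Fin m, Fin (ni i) → FAtom L k)
    (hI : @SatECPBC L k m ni A (L.Term Empty) (herbrandStructure L S)) :
    ∀ (B : Type w) (sb : L.Structure B), (∀ a ∈ S, a.HoldsIn B sb) →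
      @SatECPBC L k m ni A B sb :=
  fun B _ hS =>
    @SatECPBC.map_hom L k m ni A _ B (herbrandStructure L S) _ (herbrandEval L S B hS) hI

/-- If the least Herbrand model of a set `S` of ground atoms (over a signature with at
least one constant) satisfies the existential closure `φ` of a positive boolean
combination of atoms, then `φ` is a logical consequence of `S`: every structure
satisfying all atoms of `S` satisfies `φ`. -/
theorem herbrand_sat_implies_logical_consequence (L : FirstOrder.Language.{u, v})
    (hconst : Nonempty L.Constants) (S : Set (GroundAtom L))
    {k m : ℕ} {ni : Fin m → ℕ} (A : ∀ i : Fin m, Fin (ni i) → FAtom L k)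
    (hI : @SatECPBC L k m ni A (L.Term Empty) (herbrandStructure L S)) :
    ∀ (B : Type w) (sb : L.Structure B), (∀ a ∈ S, a.HoldsIn B sb) →
      @SatECPBC L k m ni A B sb :=
  herbrand_sat_implies_logical_consequence_general L S A hI
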